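/- Let S be a semigroup and let p be a strongly productive ultrafilter on S. If p contains the set FP(x) for some sequence x in S satisfying the ordered uniqueness of finite products, then p is sparse. -/

import Mathlib

/-- `𝔽`: the collection of finite nonempty subsets of `ℕ`. -/
abbrev FinsetNat := {a : Finset ℕ // a.Nonempty}

/-- `listMul a l` is the product `a * l₀ * l₁ * ⋯` of a nonempty list in a magma. -/
def listMul {S : Type*} [Mul S] : S → List S → S
  | a, [] => a
  | a, b :: l => a * listMul b l

/-- `finsetMul x a` is the product `∏_{i ∈ a} x i`, taken in increasing order of indices
(junk value `x 0` if `a` is empty). -/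
def finsetMul {S : Type*} [Mul S] (x : ℕ → S) (a : Finset ℕ) : S :=
  match (a.sort (· ≤ ·)).map x with
  | [] => x 0
  | b :: l => listMul b l

/-- `FPIn x D` is the set of products `∏_{i ∈ a} x i` (in increasing order of indices), where
`a` ranges over the finite nonempty subsets of `D`. -/
def FPIn {S : Type*} [Semigroup S] (x : ℕ → S) (D : Set ℕ) : Set S :=
  {s | ∃ a : Finset ℕ, a.Nonempty ∧ ↑a ⊆ D ∧ s = finsetMul x a}

/-- `FPfin x` is the set of products `∏_{i ∈ a} x i` (in increasing order of indices), where
`a` ranges over all finite nonempty subsets of `ℕ`. -/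
def FPfin {S : Type*} [Semigroup S] (x : ℕ → S) : Set S :=
  FPIn x Set.univ

/-- An ultrafilter `p` on a semigroup `S` is *strongly productive* if every member of `p`
contains a set of the form `FP x` that itself belongs to `p`. -/
def StronglyProductive {S : Type*} [Semigroup S] (p : Ultrafilter S) : Prop :=
  ∀ A ∈ p, ∃ x : ℕ → S, FPfin x ⊆ A ∧ FPfin x ∈ p

/-- A sequence in `𝔽` is *ordered* if `max (b n) < min (b (n+1))` for all `n`. -/
def OrderedSeq (b : ℕ → FinsetNat) : Prop :=
  ∀ n : ℕ, (b n : Finset ℕ).max' (b n).2 < (b (n + 1) : Finset ℕ).min' (b (n + 1)).2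

/-- `FU b` is the set of unions `⋃_{i ∈ a} b i` with `a` a finite nonempty subset of `ℕ`. -/
def FU (b : ℕ → FinsetNat) : Set FinsetNat :=
  {c | ∃ a : Finset ℕ, a.Nonempty ∧ (c : Finset ℕ) = a.biUnion fun i => (b i : Finset ℕ)}

/-- An ultrafilter `q` on `𝔽` is an *ordered union ultrafilter* if every member of `q` contains
a set of the form `FU b`, with `b` ordered, that itself belongs to `q`. -/
def OrderedUnionUltrafilter (q : Ultrafilter FinsetNat) : Prop :=
  ∀ A ∈ q, ∃ b : ℕ → FinsetNat, OrderedSeq b ∧ FU b ⊆ A ∧ FU b ∈ q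

/-- A strongly productive ultrafilter `p` on `S` is *multiplicatively isomorphic to an ordered
union ultrafilter* if there is a sequence `x` in `S` such that `a ↦ ∏_{i ∈ a} x i` is injective
and `{f⁻¹[A] : A ∈ p}` is an ordered union ultrafilter on `𝔽`. -/
def MultIsoOrderedUnion {S : Type*} [Semigroup S] (p : Ultrafilter S) : Prop :=
  ∃ x : ℕ → S, Function.Injective (fun a : FinsetNat => finsetMul x (a : Finset ℕ)) ∧
    ∃ q : Ultrafilter FinsetNat, OrderedUnionUltrafilter q ∧
      ∀ B : Set FinsetNat,
        B ∈ q ↔ ∃ A ∈ p, B = (fun a : FinsetNat => finsetMul x (a : Finset ℕ)) ⁻¹' A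

/-- A strongly productive ultrafilter `p` on `S` is *sparse* if for every `A ∈ p` there are a
sequence `x` in `S` and an infinite set `D ⊆ ℕ` with infinite complement such that
`FP x ⊆ A` and the set of finite products of the subsequence of `x` indexed by `D` is in `p`. -/
def SparseSP {S : Type*} [Semigroup S] (p : Ultrafilter S) : Prop :=
  ∀ A ∈ p, ∃ (x : ℕ → S) (D : Set ℕ), D.Infinite ∧ D.compl.Infinite ∧
    FPfin x ⊆ A ∧ FPIn x D ∈ p

/-- A sequence `x` in `S` satisfies the *ordered uniqueness of finite products* if
`a ↦ ∏_{i ∈ a} x i` is injective on `𝔽` and whenever the product of the values at `a` and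
`b` again lies in `FP x`, then `max a < min b`. -/
def OrderedUniqueness {S : Type*} [Semigroup S] (x : ℕ → S) : Prop :=
  Function.Injective (fun a : FinsetNat => finsetMul x (a : Finset ℕ)) ∧
    ∀ a b : FinsetNat,
      finsetMul x (a : Finset ℕ) * finsetMul x (b : Finset ℕ) ∈ FPfin x →
        (a : Finset ℕ).max' a.2 < (b : Finset ℕ).min' b.2

/-!
Given `A ∈ p`, strong productivity gives `y` with `FP y ∈ p` and `FP y ⊆ A ∩ FP x`.
Since `FP y ⊆ FP x`, ordered uniqueness of `x` forces each `y n` to be the product of `x` over a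
block `b n`, with the blocks in increasing order; products of `y` are then products of `x` over
unions of blocks, and `y` inherits ordered uniqueness. For such `y` with `FP y ∈ p`, the
products of `y` over index sets that are not intervals form a member of `p`: otherwise strong
productivity yields `z` with `FP z ⊆ FP y` avoiding them, but `z 0 * z 2` is the product over
the union of the blocks of `z 0` and `z 2`, which skips the block of `z 1`. Choosing `z` with
`FP z` inside that member, every block of `z` has a gap, so the union `D` of the blocks is
infinite with infinite complement, and `FP z ⊆ FP (y restricted to D)`.
-/

open Finset

section

variable {S : Type*} [Semigroup S]

theorem coe_listMul (a : S) (l : List S) :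
    ((listMul a l : S) : WithOne S) = ((a :: l).map (↑)).prod := by
  induction l generalizing a with
  | nil => simp [listMul]
  | cons b l ih => simp [listMul, ih]

theorem coe_finsetMul (x : ℕ → S) {a : Finset ℕ} (ha : a.Nonempty) :
    ((finsetMul x a : S) : WithOne S) = ((a.sort (· ≤ ·)).map fun i => (x i : WithOne S)).prod := by
  unfold finsetMul
  cases h : a.sort (· ≤ ·) with
  | nil =>
    obtain ⟨i, hi⟩ := ha
    simpa [h] using (mem_sort (· ≤ ·)).2 hi
  | cons i l => simp [coe_listMul, Function.comp_def]

theorem Finset.sort_union_of_lt {α : Type*} [LinearOrder α] {a b : Finset α}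
    (h : ∀ u ∈ a, ∀ v ∈ b, u < v) :
    (a ∪ b).sort (· ≤ ·) = a.sort (· ≤ ·) ++ b.sort (· ≤ ·) := by
  have hl : (a.sort (· ≤ ·) ++ b.sort (· ≤ ·)).Pairwise (· < ·) :=
    List.pairwise_append.2 ⟨(sortedLT_sort a).pairwise, (sortedLT_sort b).pairwise,
      fun u hu v hv => h u (mem_sort _ |>.1 hu) v (mem_sort _ |>.1 hv)⟩
  have := (List.toFinset_sort (· ≤ ·) hl.nodup).2 (hl.imp le_of_lt)
  rwa [List.toFinset_append, sort_toFinset, sort_toFinset] at this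

theorem finsetMul_union (x : ℕ → S) {a b : Finset ℕ} (ha : a.Nonempty) (hb : b.Nonempty)
    (h : ∀ u ∈ a, ∀ v ∈ b, u < v) :
    finsetMul x (a ∪ b) = finsetMul x a * finsetMul x b :=
  WithOne.coe_injective <| by
    rw [WithOne.coe_mul, coe_finsetMul x (ha.mono subset_union_left), coe_finsetMul x ha,
      coe_finsetMul x hb, sort_union_of_lt h, List.map_append, List.prod_append]

theorem finsetMul_singleton (x : ℕ → S) (i : ℕ) : finsetMul x {i} = x i := by
  simp [finsetMul, listMul]

theorem finsetMul_mem_FPfin (x : ℕ → S) {a : Finset ℕ} (ha : a.Nonempty) :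
    finsetMul x a ∈ FPfin x :=
  ⟨a, ha, Set.subset_univ _, rfl⟩

theorem self_mem_FPfin (x : ℕ → S) (n : ℕ) : x n ∈ FPfin x := by
  simpa [finsetMul_singleton] using finsetMul_mem_FPfin x (singleton_nonempty n)

theorem mul_mem_FPfin (x : ℕ → S) {i j : ℕ} (hij : i < j) : x i * x j ∈ FPfin x := by
  rw [← finsetMul_singleton x i, ← finsetMul_singleton x j,
    ← finsetMul_union x (singleton_nonempty i) (singleton_nonempty j) (by simpa)]
  exact finsetMul_mem_FPfin x (singleton_nonempty i |>.mono subset_union_left)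

theorem Set.exists_gap_of_not_ordConnected {α : Type*} [PartialOrder α] {s : Set α}
    (hs : ¬ s.OrdConnected) : ∃ j ∉ s, (∃ u ∈ s, u < j) ∧ ∃ v ∈ s, j < v := by
  simp only [Set.ordConnected_iff, Set.not_subset, not_forall] at hs
  obtain ⟨u, hu, v, hv, -, j, ⟨huj, hjv⟩, hj⟩ := hs
  exact ⟨j, hj, ⟨u, hu, huj.lt_of_ne (ne_of_mem_of_not_mem hu hj)⟩,
    ⟨v, hv, hjv.lt_of_ne (ne_of_mem_of_not_mem hv hj).symm⟩⟩

theorem Finset.nonempty_of_not_ordConnected {α : Type*} [Preorder α] {a : Finset α}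
    (ha : ¬ (a : Set α).OrdConnected) : a.Nonempty :=
  nonempty_iff_ne_empty.2 fun h => ha (by rw [h, coe_empty]; exact Set.ordConnected_empty)

structure IsBlockSeq (b : ℕ → Finset ℕ) : Prop where
  nonempty : ∀ n, (b n).Nonempty
  lt : ∀ {n m}, n < m → ∀ u ∈ b n, ∀ v ∈ b m, u < v

namespace IsBlockSeq

variable {b : ℕ → Finset ℕ} (hb : IsBlockSeq b)
include hb

theorem eq_of_mem {i j e : ℕ} (hi : e ∈ b i) (hj : e ∈ b j) : i = j := by
  by_contra hij
  rcases Nat.lt_or_gt_of_ne hij with h | h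
  · exact lt_irrefl e (hb.lt h e hi e hj)
  · exact lt_irrefl e (hb.lt h e hj e hi)

theorem mem_biUnion_iff {a : Finset ℕ} {i e : ℕ} (he : e ∈ b i) : e ∈ a.biUnion b ↔ i ∈ a := by
  refine ⟨fun h => ?_, fun h => mem_biUnion.2 ⟨i, h, he⟩⟩
  obtain ⟨j, hj, hej⟩ := mem_biUnion.1 h
  rwa [hb.eq_of_mem he hej]

theorem biUnion_nonempty {a : Finset ℕ} (ha : a.Nonempty) : (a.biUnion b).Nonempty :=
  ha.biUnion fun i _ => hb.nonempty i

theorem biUnion_injective : Function.Injective fun a : Finset ℕ => a.biUnion b := by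
  intro a d h
  ext i
  obtain ⟨e, he⟩ := hb.nonempty i
  rw [← hb.mem_biUnion_iff he, ← hb.mem_biUnion_iff he]
  exact Eq.to_iff (congrArg (e ∈ ·) h)

theorem lt_of_biUnion_lt {a d : Finset ℕ}
    (h : ∀ u ∈ a.biUnion b, ∀ v ∈ d.biUnion b, u < v) : ∀ i ∈ a, ∀ j ∈ d, i < j := by
  intro i hi j hj
  obtain ⟨e, he⟩ := hb.nonempty i
  obtain ⟨f, hf⟩ := hb.nonempty j
  have hef := h e (mem_biUnion.2 ⟨i, hi, he⟩) f (mem_biUnion.2 ⟨j, hj, hf⟩)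
  by_contra! hji
  rcases hji.lt_or_eq with hji | rfl
  · exact lt_asymm hef (hb.lt hji f hf e he)
  · exact lt_irrefl e (h e (mem_biUnion.2 ⟨j, hi, he⟩) e (mem_biUnion.2 ⟨j, hj, he⟩))

theorem finsetMul_biUnion {x y : ℕ → S} (hy : ∀ n, y n = finsetMul x (b n)) {a : Finset ℕ}
    (ha : a.Nonempty) : finsetMul y a = finsetMul x (a.biUnion b) := by
  induction a using Finset.induction_on_max with
  | empty => exact absurd ha not_nonempty_empty
  | insert i s hlt ih =>
    rcases s.eq_empty_or_nonempty with rfl | hs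
    · simp [finsetMul_singleton, hy]
    have hblocks : ∀ u ∈ s.biUnion b, ∀ v ∈ b i, u < v := by
      intro u hu v hv
      obtain ⟨j, hj, hu⟩ := mem_biUnion.1 hu
      exact hb.lt (hlt j hj) u hu v hv
    rw [insert_eq, union_comm, union_biUnion, singleton_biUnion,
      finsetMul_union y hs (singleton_nonempty i) (by simpa),
      finsetMul_union x (hb.biUnion_nonempty hs) (hb.nonempty i) hblocks,
      ih hs, finsetMul_singleton, hy]

theorem not_ordConnected_union {i j k : ℕ} (hij : i < j) (hjk : j < k) :
    ¬ (↑(b i ∪ b k) : Set ℕ).OrdConnected := by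
  intro hc
  obtain ⟨e, he⟩ := hb.nonempty j
  obtain ⟨u, hu⟩ := hb.nonempty i
  obtain ⟨v, hv⟩ := hb.nonempty k
  have hmem : e ∈ (↑(b i ∪ b k) : Set ℕ) := hc.out (by simp [hu]) (by simp [hv])
    ⟨(hb.lt hij u hu e he).le, (hb.lt hjk e he v hv).le⟩
  rcases mem_union.1 hmem with h | h
  · exact lt_irrefl e (hb.lt hij e h e he)
  · exact lt_irrefl e (hb.lt hjk e he e h)

theorem infinite_iUnion : (⋃ n, (b n : Set ℕ)).Infinite := by
  have hmono : StrictMono fun n => (b n).min' (hb.nonempty n) :=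
    strictMono_nat_of_lt_succ fun n => hb.lt n.lt_succ_self _ (min'_mem _ _) _ (min'_mem _ _)
  exact Set.infinite_of_injective_forall_mem hmono.injective
    fun n => Set.mem_iUnion.2 ⟨n, min'_mem _ _⟩

theorem infinite_compl_iUnion (hgap : ∀ n, ¬ (b n : Set ℕ).OrdConnected) :
    (⋃ n, (b n : Set ℕ))ᶜ.Infinite := by
  choose g hg hlow hhigh using fun n => Set.exists_gap_of_not_ordConnected (hgap n)
  have hmono : StrictMono g := strictMono_nat_of_lt_succ fun n => by
    obtain ⟨v, hv, hgv⟩ := hhigh n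
    obtain ⟨u, hu, hug⟩ := hlow (n + 1)
    exact hgv.trans ((hb.lt n.lt_succ_self v hv u hu).trans hug)
  refine Set.infinite_of_injective_forall_mem hmono.injective fun n hn => ?_
  obtain ⟨m, hm⟩ := Set.mem_iUnion.1 hn
  obtain ⟨u, hu, hug⟩ := hlow n
  obtain ⟨v, hv, hgv⟩ := hhigh n
  rcases lt_trichotomy m n with hmn | rfl | hnm
  · exact lt_asymm hug (hb.lt hmn _ hm u hu)
  · exact hg m hm
  · exact lt_asymm hgv (hb.lt hnm v hv _ hm)

end IsBlockSeq

namespace OrderedUniqueness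

variable {x y : ℕ → S}

theorem eq_of_finsetMul_eq (hx : OrderedUniqueness x) {a d : Finset ℕ} (ha : a.Nonempty)
    (hd : d.Nonempty) (h : finsetMul x a = finsetMul x d) : a = d :=
  congrArg Subtype.val (hx.1 (a₁ := ⟨a, ha⟩) (a₂ := ⟨d, hd⟩) h)

theorem lt_of_mul_mem (hx : OrderedUniqueness x) {a d : Finset ℕ} (ha : a.Nonempty)
    (hd : d.Nonempty) (h : finsetMul x a * finsetMul x d ∈ FPfin x) :
    ∀ u ∈ a, ∀ v ∈ d, u < v := fun u hu v hv =>
  (a.le_max' u hu).trans_lt ((hx.2 ⟨a, ha⟩ ⟨d, hd⟩ h).trans_le (d.min'_le v hv))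

theorem exists_isBlockSeq (hx : OrderedUniqueness x) (hyx : FPfin y ⊆ FPfin x) :
    ∃ b, IsBlockSeq b ∧ ∀ n, y n = finsetMul x (b n) := by
  have hblock (n : ℕ) : ∃ a : Finset ℕ, a.Nonempty ∧ y n = finsetMul x a := by
    obtain ⟨a, ha, -, h⟩ := hyx (self_mem_FPfin y n)
    exact ⟨a, ha, h⟩
  choose b hb hyb using hblock
  refine ⟨b, ⟨hb, fun {n m} hnm => hx.lt_of_mul_mem (hb n) (hb m) ?_⟩, hyb⟩
  rw [← hyb, ← hyb]
  exact hyx (mul_mem_FPfin y hnm)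

theorem of_FPfin_subset (hx : OrderedUniqueness x) (hyx : FPfin y ⊆ FPfin x) :
    OrderedUniqueness y := by
  obtain ⟨b, hb, hyb⟩ := hx.exists_isBlockSeq hyx
  have hprod (a : FinsetNat) : finsetMul y a = finsetMul x (a.1.biUnion b) :=
    hb.finsetMul_biUnion hyb a.2
  refine ⟨fun a d h => Subtype.ext (hb.biUnion_injective ?_), fun a d h => ?_⟩
  · exact hx.eq_of_finsetMul_eq (hb.biUnion_nonempty a.2) (hb.biUnion_nonempty d.2)
      (by simpa only [hprod] using h)
  · rw [hprod, hprod] at h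
    have hlt := hb.lt_of_biUnion_lt
      (hx.lt_of_mul_mem (hb.biUnion_nonempty a.2) (hb.biUnion_nonempty d.2) (hyx h))
    exact (max'_lt_iff _ _).2 fun u hu => (lt_min'_iff _ _).2 fun v hv => hlt u hu v hv

end OrderedUniqueness

def FPGap (y : ℕ → S) : Set S :=
  finsetMul y '' {a | ¬ (a : Set ℕ).OrdConnected}

theorem FPGap_subset_FPfin (y : ℕ → S) : FPGap y ⊆ FPfin y := by
  rintro _ ⟨a, ha, rfl⟩
  exact finsetMul_mem_FPfin y (nonempty_of_not_ordConnected ha)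

theorem FPGap_mem {p : Ultrafilter S} (hsp : StronglyProductive p) {y : ℕ → S}
    (hy : OrderedUniqueness y) (hyp : FPfin y ∈ p) : FPGap y ∈ p := by
  by_contra hG
  obtain ⟨z, hz, -⟩ := hsp _ (Filter.inter_mem (Ultrafilter.compl_mem_iff_notMem.2 hG) hyp)
  obtain ⟨c, hc, hzc⟩ := hy.exists_isBlockSeq fun s hs => (hz hs).2
  apply (hz (mul_mem_FPfin z zero_lt_two)).1
  refine ⟨c 0 ∪ c 2, hc.not_ordConnected_union zero_lt_one one_lt_two, ?_⟩
  rw [finsetMul_union y (hc.nonempty 0) (hc.nonempty 2) (hc.lt zero_lt_two), hzc, hzc]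

theorem exists_sparse_of_FPfin_subset_FPGap {y z : ℕ → S} (hy : OrderedUniqueness y)
    (hz : FPfin z ⊆ FPGap y) :
    ∃ D : Set ℕ, D.Infinite ∧ Dᶜ.Infinite ∧ FPfin z ⊆ FPIn y D := by
  obtain ⟨c, hc, hzc⟩ := hy.exists_isBlockSeq (hz.trans (FPGap_subset_FPfin y))
  have hgap (n : ℕ) : ¬ (c n : Set ℕ).OrdConnected := by
    obtain ⟨a, ha, hza⟩ := hz (self_mem_FPfin z n)
    rwa [← hy.eq_of_finsetMul_eq (nonempty_of_not_ordConnected ha) (hc.nonempty n)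
      (hza.trans (hzc n))]
  refine ⟨⋃ n, (c n : Set ℕ), hc.infinite_iUnion, hc.infinite_compl_iUnion hgap, ?_⟩
  rintro _ ⟨a, ha, -, rfl⟩
  refine ⟨a.biUnion c, hc.biUnion_nonempty ha, fun u hu => ?_, hc.finsetMul_biUnion hzc ha⟩
  obtain ⟨i, -, hui⟩ := mem_biUnion.1 hu
  exact Set.mem_iUnion.2 ⟨i, hui⟩

end

/-- If a strongly productive ultrafilter `p` on a semigroup contains `FP x` for some sequence
`x` satisfying the ordered uniqueness of finite products, then `p` is sparse. -/
theorem sparse_of_orderedUniqueness {S : Type*} [Semigroup S] (p : Ultrafilter S)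
    (hsp : StronglyProductive p) (x : ℕ → S) (hx : OrderedUniqueness x)
    (hmem : FPfin x ∈ p) :
    SparseSP p := by
  intro A hA
  obtain ⟨y, hyA, hyp⟩ := hsp _ (Filter.inter_mem hA hmem)
  have hy : OrderedUniqueness y := hx.of_FPfin_subset fun s hs => (hyA hs).2
  obtain ⟨z, hzG, hzp⟩ := hsp _ (FPGap_mem hsp hy hyp)
  obtain ⟨D, hD, hDc, hzD⟩ := exists_sparse_of_FPfin_subset_FPGap hy hzG
  exact ⟨y, D, hD, hDc, fun s hs => (hyA hs).1, Filter.mem_of_superset hzp hzD⟩
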